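/- arXiv:quant-ph/0608161 — 2 statements merged into one kernel-verified Lean document; each statement's English description precedes it below -/
import Mathlib

section
/- (Fejér–Riesz theorem) A Laurent polynomial Q(z) = \sum_{i=-D}^{D} q_i z^i is real-valued and nonnegative on the unit circle |z|=1 if and only if there exists a polynomial P(z) = \sum_{i=0}^{D} p_i z^i of degree at most D such that Q(z) = P(z) * conj(P(1/conj(z))) for all nonzero z. -/
/-!
Write `z ^ D * Q z = f z` with `f` a polynomial of degree at most `2 * D`. Reality of `Q` on
the unit circle makes `f` self-inversive, `f z = z ^ (2 * D) * conj (f (conj z)⁻¹)`, so the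
multiplicity of a nonzero root `a` equals that of its inversion `(conj a)⁻¹` in the unit circle,
while nonnegativity makes the roots on the circle, the fixed points of the inversion, have even
multiplicity. The nonzero roots therefore split as `S + (conj S)⁻¹`; the roots at `0` account
for the missing top degree, and `Q z = κ * P₀ z * conj (P₀ (conj z)⁻¹)` with
`P₀ = ∏_{a ∈ S} (X - a)`. Evaluating at a point of the circle where `P₀` does not vanish shows
`κ ≥ 0`, so `P = √κ • P₀`.
-/

open Polynomial Complex
open scoped ComplexOrder ComplexConjugate

theorem Multiset.exists_eq_add_map_of_involutive {α : Type*} [DecidableEq α] {ι : α → α}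
    (hι : Function.Involutive ι) (M : Multiset α) (hsymm : ∀ a, M.count (ι a) = M.count a)
    (heven : ∀ a, ι a = a → Even (M.count a)) : ∃ S : Multiset α, M = S + S.map ι := by
  induction M using Multiset.strongInductionOn with
  | ih M ih =>
  rcases M.empty_or_exists_mem with rfl | ⟨a, ha⟩
  · exact ⟨0, by simp⟩
  set N : Multiset α := a ::ₘ {ι a}
  have hN_symm : ∀ b, N.count (ι b) = N.count b := by
    have hN : N.map ι = N := by
      simpa [N, hι a] using Multiset.pair_comm (ι a) a
    intro b
    rw [← hN, Multiset.count_map_eq_count' _ _ hι.injective, hN]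
  have hN_even : ∀ b, ι b = b → Even (N.count b) := by
    intro b hb
    have : b = ι a ↔ b = a := by rw [← hb, hι.injective.eq_iff, hb]
    rcases eq_or_ne b a with rfl | hba
    · simp [N, hb]
    · simp [N, hba, this]
  have hNM : N ≤ M := by
    have hpos := Multiset.count_pos.mpr ha
    have hmem : ι a ∈ M.erase a := by
      by_cases h : ι a = a
      · obtain ⟨k, hk⟩ := heven a h
        rw [h, ← Multiset.count_pos, Multiset.count_erase_self]
        omega
      · rw [Multiset.mem_erase_of_ne h, ← Multiset.count_pos, hsymm]
        exact hpos
    rw [← Multiset.cons_erase ha]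
    exact Multiset.cons_le_cons a (Multiset.singleton_le.mpr hmem)
  have hM : M = N + (M - N) := (add_tsub_cancel_of_le hNM).symm
  have hlt : M - N < M := by
    conv_rhs => rw [hM]
    exact lt_add_of_pos_left _ (pos_iff_ne_zero.mpr (Multiset.cons_ne_zero))
  have hsymm' : ∀ b, (M - N).count (ι b) = (M - N).count b := fun b => by
    rw [Multiset.count_sub, Multiset.count_sub, hsymm, hN_symm]
  have heven' : ∀ b, ι b = b → Even ((M - N).count b) := fun b hb => by
    rw [Multiset.count_sub, Nat.even_sub (Multiset.le_iff_count.mp hNM b)]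
    exact iff_of_true (heven b hb) (hN_even b hb)
  obtain ⟨S, hS⟩ := ih (M - N) hlt hsymm' heven'
  refine ⟨a ::ₘ S, ?_⟩
  rw [hM, hS]
  simpa [N] using Multiset.cons_swap _ _ _

namespace FejerRiesz

lemma ne_zero_of_norm_eq_one {z : ℂ} (hz : ‖z‖ = 1) : z ≠ 0 :=
  ne_zero_of_norm_ne_zero (hz ▸ one_ne_zero)

/-- A parametrisation of the unit circle for which `cayley t - 1` is `t` times a nowhere vanishing
function (`cayley_sub_one`), so that a root of multiplicity `m` on the circle becomes a factor
`t ^ m`. -/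
noncomputable def cayley (t : ℝ) : ℂ := (1 + t * I) / (1 - t * I)

lemma one_sub_ofReal_mul_I_ne_zero (t : ℝ) : 1 - t * I ≠ 0 := by
  intro h
  simpa using congrArg re h

lemma norm_cayley (t : ℝ) : ‖cayley t‖ = 1 := by
  have hconj : 1 - t * I = conj (1 + t * I) := by simp [sub_eq_add_neg]
  rw [cayley, norm_div, hconj, norm_conj, div_self]
  rw [← norm_conj, ← hconj]
  exact norm_ne_zero_iff.mpr (one_sub_ofReal_mul_I_ne_zero t)

lemma cayley_injective : Function.Injective cayley := by
  intro s t hst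
  rw [cayley, cayley, div_eq_div_iff (one_sub_ofReal_mul_I_ne_zero s)
    (one_sub_ofReal_mul_I_ne_zero t)] at hst
  linarith [show -t + s = -s + t by simpa using congrArg im hst]

lemma cayley_sub_one (t : ℝ) : cayley t - 1 = t * (2 * I / (1 - t * I)) := by
  have := one_sub_ofReal_mul_I_ne_zero t
  rw [cayley]
  field_simp
  ring

lemma continuous_cayley : Continuous cayley :=
  Continuous.div (by fun_prop) (by fun_prop) one_sub_ofReal_mul_I_ne_zero

lemma infinite_setOf_norm_eq_one : {z : ℂ | ‖z‖ = 1}.Infinite :=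
  (Set.infinite_range_of_injective cayley_injective).mono
    (Set.range_subset_iff.mpr norm_cayley)

theorem even_of_forall_nonneg_pow_mul {m : ℕ} {G : ℝ → ℂ} (hG : ContinuousAt G 0)
    (hG0 : G 0 ≠ 0) (h : ∀ t : ℝ, 0 ≤ (t : ℂ) ^ m * G t) : Even m := by
  by_contra hm
  rw [Nat.not_even_iff_odd] at hm
  have hG_eq : ∀ t : ℝ, t ≠ 0 → G t = ((t ^ m)⁻¹ : ℝ) * ((t : ℂ) ^ m * G t) := by
    intro t ht
    have : (t : ℂ) ^ m ≠ 0 := pow_ne_zero _ (ofReal_ne_zero.mpr ht)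
    push_cast
    field_simp
  have hpos : 0 ≤ G 0 := by
    refine ge_of_tendsto (hG.tendsto.mono_left (nhdsWithin_le_nhds (s := Set.Ioi 0))) ?_
    filter_upwards [self_mem_nhdsWithin] with t (ht : 0 < t)
    rw [hG_eq t ht.ne']
    exact mul_nonneg (zero_le_real.mpr (by positivity)) (h t)
  have hneg : G 0 ≤ 0 := by
    refine le_of_tendsto (hG.tendsto.mono_left (nhdsWithin_le_nhds (s := Set.Iio 0))) ?_
    filter_upwards [self_mem_nhdsWithin] with t (ht : t < 0)
    rw [hG_eq t ht.ne]
    refine mul_nonpos_of_nonpos_of_nonneg ?_ (h t)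
    exact real_le_real.mpr (by simpa using (hm.pow_neg ht).le)
  exact hG0 (le_antisymm hneg hpos)

/-- Inversion in the unit circle. Since `0⁻¹ = 0`, also `circleInv 0 = 0`, so it is an involution
of all of `ℂ`. -/
noncomputable def circleInv (a : ℂ) : ℂ := (conj a)⁻¹

lemma circleInv_involutive : Function.Involutive circleInv := fun a => by simp [circleInv]

lemma circleInv_ne_zero {a : ℂ} (ha : a ≠ 0) : circleInv a ≠ 0 := by simpa [circleInv] using ha

lemma circleInv_mul_conj {a : ℂ} (ha : a ≠ 0) : circleInv a * conj a = 1 :=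
  inv_mul_cancel₀ (by simpa using ha)

lemma circleInv_eq_self_iff {a : ℂ} (ha : a ≠ 0) : circleInv a = a ↔ ‖a‖ = 1 := by
  rw [circleInv, ← mul_eq_one_iff_inv_eq₀ (by simpa using ha), conj_mul', ← ofReal_pow,
    ofReal_eq_one, pow_eq_one_iff_of_nonneg (norm_nonneg a) two_ne_zero]

lemma circleInv_of_norm_eq_one {z : ℂ} (hz : ‖z‖ = 1) : circleInv z = z :=
  (circleInv_eq_self_iff (ne_zero_of_norm_eq_one hz)).mpr hz

lemma conj_circleInv (z : ℂ) : conj (circleInv z) = z⁻¹ := by simp [circleInv]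

lemma eval_reflect_map_conj {p : ℂ[X]} {N : ℕ} (hp : p.natDegree ≤ N) {z : ℂ} (hz : z ≠ 0) :
    (reflect N (p.map (starRingEnd ℂ))).eval z = z ^ N * conj (p.eval (circleInv z)) := by
  let := invertibleOfNonzero (inv_ne_zero hz)
  have h := eval₂_reflect_mul_pow (RingHom.id ℂ) z⁻¹ N (p.map (starRingEnd ℂ))
    (natDegree_map_le.trans hp)
  rw [invOf_eq_inv, inv_inv, ← eval, ← eval] at h
  have h_conj : (p.map (starRingEnd ℂ)).eval z⁻¹ = conj (p.eval (circleInv z)) := by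
    rw [eval_map, circleInv, ← map_inv₀, ← eval₂_at_apply, conj_conj]
  calc (reflect N (p.map (starRingEnd ℂ))).eval z
      = z ^ N * ((reflect N (p.map (starRingEnd ℂ))).eval z * z⁻¹ ^ N) := by
        rw [inv_pow, mul_left_comm, mul_inv_cancel₀ (pow_ne_zero N hz), mul_one]
    _ = z ^ N * conj (p.eval (circleInv z)) := by rw [h, h_conj]

lemma reflect_X_sub_C_pow {K : Type*} [Field K] {b : K} (hb : b ≠ 0) (j : ℕ) :
    reflect j ((X - C b) ^ j) = C ((-b) ^ j) * (X - C b⁻¹) ^ j := by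
  induction j with
  | zero => simp
  | succ j ih =>
    have hj : ((X - C b) ^ j).natDegree ≤ j := by simp
    have h_one : reflect 1 (X - C b) = C (-b) * (X - C b⁻¹) := by
      have : reflect 1 (X : K[X]) = 1 := by simp
      rw [reflect_sub, reflect_C, this, mul_sub, ← C_mul]
      simp [hb]
      ring
    rw [pow_succ, reflect_mul _ _ hj (natDegree_X_sub_C_le b), ih, h_one, pow_succ, pow_succ,
      C_mul]
    ring

section SelfInversive

variable {f : ℂ[X]} {N : ℕ}

lemma X_sub_C_circleInv_pow_dvd (hN : f.natDegree ≤ N)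
    (hf : reflect N (f.map (starRingEnd ℂ)) = f) {a : ℂ} (ha : a ≠ 0) {j : ℕ}
    (hj : (X - C a) ^ j ∣ f) : (X - C (circleInv a)) ^ j ∣ f := by
  obtain ⟨u, rfl⟩ := hj
  rcases eq_or_ne u 0 with rfl | hu
  · simp
  rw [natDegree_mul (pow_ne_zero _ (X_sub_C_ne_zero a)) hu, natDegree_pow, natDegree_X_sub_C,
    mul_one] at hN
  have hu' : (u.map (starRingEnd ℂ)).natDegree ≤ N - j := natDegree_map_le.trans (by omega)
  rw [← hf, Polynomial.map_mul, Polynomial.map_pow, Polynomial.map_sub, map_X, map_C,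
    show N = j + (N - j) by omega, reflect_mul _ _ (by simp) hu',
    reflect_X_sub_C_pow (by simpa using ha)]
  exact dvd_mul_of_dvd_left (dvd_mul_left _ _) _

lemma rootMultiplicity_circleInv (hf0 : f ≠ 0) (hN : f.natDegree ≤ N)
    (hf : reflect N (f.map (starRingEnd ℂ)) = f) {a : ℂ} (ha : a ≠ 0) :
    f.rootMultiplicity (circleInv a) = f.rootMultiplicity a := by
  have key : ∀ b : ℂ, b ≠ 0 → f.rootMultiplicity b ≤ f.rootMultiplicity (circleInv b) :=
    fun b hb => (le_rootMultiplicity_iff hf0).mpr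
      (X_sub_C_circleInv_pow_dvd hN hf hb (pow_rootMultiplicity_dvd f b))
  refine le_antisymm ?_ (key a ha)
  simpa only [circleInv_involutive a] using key _ (circleInv_ne_zero ha)

lemma natTrailingDegree_add_natDegree (hf0 : f ≠ 0) (hN : f.natDegree ≤ N)
    (hf : reflect N (f.map (starRingEnd ℂ)) = f) : f.natTrailingDegree + f.natDegree = N := by
  have hcoeff : ∀ i ≤ N, f.coeff i = conj (f.coeff (N - i)) := by
    intro i hi
    conv_lhs => rw [← hf]
    rw [coeff_reflect, revAt_le hi, coeff_map]
  have h_le : f.natTrailingDegree ≤ N - f.natDegree := by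
    refine natTrailingDegree_le_of_ne_zero ?_
    rw [hcoeff _ (Nat.sub_le _ _), Nat.sub_sub_self hN, coeff_natDegree]
    simpa using hf0
  have h_ge : N - f.natDegree ≤ f.natTrailingDegree := le_natTrailingDegree hf0 fun i hi => by
    rw [hcoeff i (by omega), coeff_eq_zero_of_natDegree_lt (by omega), map_zero]
  omega

end SelfInversive

lemma reflect_map_conj_eq_self {f : ℂ[X]} {D : ℕ} (hdeg : f.natDegree ≤ 2 * D)
    (hf : ∀ z : ℂ, ‖z‖ = 1 → ((z ^ D)⁻¹ * f.eval z).im = 0) :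
    reflect (2 * D) (f.map (starRingEnd ℂ)) = f := by
  refine eq_of_infinite_eval_eq _ _ (infinite_setOf_norm_eq_one.mono fun z (hz : ‖z‖ = 1) => ?_)
  have hz0 := ne_zero_of_norm_eq_one hz
  have hreal := conj_eq_iff_im.mpr (hf z hz)
  rw [map_mul, map_inv₀, map_pow, ← inv_eq_conj hz, inv_pow, inv_inv,
    eq_inv_mul_iff_mul_eq₀ (pow_ne_zero D hz0)] at hreal
  rw [Set.mem_ofPred_eq, eval_reflect_map_conj hdeg hz0, circleInv_of_norm_eq_one hz]
  linear_combination hreal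

lemma even_rootMultiplicity_of_norm_eq_one {f : ℂ[X]} (hf0 : f ≠ 0) {D : ℕ}
    (hf : ∀ z : ℂ, ‖z‖ = 1 → 0 ≤ (z ^ D)⁻¹ * f.eval z) {w : ℂ} (hw : ‖w‖ = 1) :
    Even (f.rootMultiplicity w) := by
  obtain ⟨g, hfg, hg⟩ := exists_eq_pow_rootMultiplicity_mul_and_not_dvd f hf0 w
  rw [dvd_iff_isRoot] at hg
  have hw0 := ne_zero_of_norm_eq_one hw
  set m := f.rootMultiplicity w
  have hγ : ∀ t, ‖w * cayley t‖ = 1 := fun t => by simp [norm_cayley, hw]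
  -- along `z = w * cayley t`, `(z ^ D)⁻¹ * f.eval z = t ^ m * G t` with `G 0 ≠ 0`
  refine even_of_forall_nonneg_pow_mul (G := fun t => (w * (2 * I / (1 - t * I))) ^ m *
      (((w * cayley t) ^ D)⁻¹ * g.eval (w * cayley t))) ?_ ?_ fun t => ?_
  · have := continuous_cayley
    have := one_sub_ofReal_mul_I_ne_zero
    have := fun t => ne_zero_of_norm_eq_one (hγ t)
    fun_prop (disch := simp_all)
  · simpa [cayley, hw0] using hg
  · have hsub : w * cayley t - w = t * (w * (2 * I / (1 - t * I))) := by
      rw [← mul_sub_one, cayley_sub_one]; ring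
    have := hf (w * cayley t) (hγ t)
    rw [hfg, eval_mul, eval_pow, eval_sub, eval_X, eval_C, hsub] at this
    convert this using 1
    ring

lemma prod_sub_circleInv {S : Multiset ℂ} (hS : ∀ a ∈ S, a ≠ 0) {z : ℂ} (hz : z ≠ 0) :
    (S.map fun a => z - circleInv a).prod =
      (S.map fun a => -circleInv a).prod * z ^ Multiset.card S *
        conj (S.map fun a => circleInv z - a).prod := by
  have hterm : ∀ a ∈ S, z - circleInv a = -circleInv a * z * conj (circleInv z - a) := by
    intro a ha
    have h := circleInv_mul_conj (hS a ha)
    rw [map_sub, conj_circleInv]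
    field_simp
    linear_combination (-z) * h
  rw [Multiset.map_congr rfl hterm, Multiset.prod_map_mul, Multiset.prod_map_mul,
    Multiset.map_const', Multiset.prod_replicate, map_multiset_prod, Multiset.map_map]
  rfl

lemma eval_multiset_prod_X_sub_C {R : Type*} [CommRing R] (S : Multiset R) (x : R) :
    (S.map fun a => X - C a).prod.eval x = (S.map fun a => x - a).prod := by
  simp [eval_multiset_prod, Multiset.map_map]

section Roots

variable {f : ℂ[X]} {S : Multiset ℂ}

lemma exists_roots_filter_eq (hf0 : f ≠ 0) {D : ℕ} (hdeg : f.natDegree ≤ 2 * D)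
    (hsymm : reflect (2 * D) (f.map (starRingEnd ℂ)) = f)
    (hf : ∀ z : ℂ, ‖z‖ = 1 → 0 ≤ (z ^ D)⁻¹ * f.eval z) :
    ∃ S : Multiset ℂ, f.roots.filter (· ≠ 0) = S + S.map circleInv := by
  refine Multiset.exists_eq_add_map_of_involutive circleInv_involutive _ (fun a => ?_)
    (fun a ha => ?_)
  · rcases eq_or_ne a 0 with rfl | ha
    · simp [circleInv]
    rw [Multiset.count_filter_of_pos (p := (· ≠ 0)) (circleInv_ne_zero ha),
      Multiset.count_filter_of_pos (p := (· ≠ 0)) ha,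
      count_roots, count_roots, rootMultiplicity_circleInv hf0 hdeg hsymm ha]
  · rcases eq_or_ne a 0 with rfl | ha0
    · simp
    rw [Multiset.count_filter_of_pos (p := (· ≠ 0)) ha0, count_roots]
    exact even_rootMultiplicity_of_norm_eq_one hf0 hf ((circleInv_eq_self_iff ha0).mp ha)

lemma roots_eq_replicate_add (hS : f.roots.filter (· ≠ 0) = S + S.map circleInv) :
    f.roots = Multiset.replicate f.natTrailingDegree 0 + (S + S.map circleInv) := by
  rw [← hS, ← rootMultiplicity_eq_natTrailingDegree', ← count_roots, ← Multiset.filter_eq',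
    Multiset.filter_add_not]

lemma eval_eq_of_roots_filter (hS : f.roots.filter (· ≠ 0) = S + S.map circleInv) (z : ℂ) :
    f.eval z = f.leadingCoeff * z ^ f.natTrailingDegree *
      ((S.map fun a => z - a).prod * (S.map fun a => z - circleInv a).prod) := by
  conv_lhs =>
    rw [← C_leadingCoeff_mul_prod_multiset_X_sub_C (p := f) IsAlgClosed.card_roots_eq_natDegree]
  rw [eval_mul, eval_C, eval_multiset_prod, Multiset.map_map, roots_eq_replicate_add hS]
  simp [mul_assoc]

lemma inv_pow_mul_eval_eq (hS : f.roots.filter (· ≠ 0) = S + S.map circleInv) {D : ℕ}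
    (hD : f.natTrailingDegree + Multiset.card S = D) {z : ℂ} (hz : z ≠ 0) :
    (z ^ D)⁻¹ * f.eval z = f.leadingCoeff * (S.map fun a => -circleInv a).prod *
      ((S.map fun a => X - C a).prod.eval z *
        conj ((S.map fun a => X - C a).prod.eval (circleInv z))) := by
  have hS0 : ∀ a ∈ S, a ≠ 0 := fun a ha => by
    have : a ∈ f.roots.filter (· ≠ 0) := by rw [hS]; exact Multiset.mem_add.mpr (Or.inl ha)
    exact (Multiset.mem_filter.mp this).2
  rw [eval_eq_of_roots_filter hS, prod_sub_circleInv hS0 hz, eval_multiset_prod_X_sub_C,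
    eval_multiset_prod_X_sub_C, ← hD, pow_add]
  field_simp

lemma natTrailingDegree_add_card (hf0 : f ≠ 0) {D : ℕ} (hdeg : f.natDegree ≤ 2 * D)
    (hsymm : reflect (2 * D) (f.map (starRingEnd ℂ)) = f)
    (hS : f.roots.filter (· ≠ 0) = S + S.map circleInv) :
    f.natTrailingDegree + Multiset.card S = D := by
  have h_sum := natTrailingDegree_add_natDegree hf0 hdeg hsymm
  have h_card := congrArg Multiset.card (roots_eq_replicate_add hS)
  rw [IsAlgClosed.card_roots_eq_natDegree] at h_card
  simp only [Multiset.card_add, Multiset.card_replicate, Multiset.card_map] at h_card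
  omega

end Roots

lemma nonneg_of_forall_norm_eq_one_nonneg_mul {P : ℂ[X]} (hP : P ≠ 0) {κ : ℂ}
    (h : ∀ z : ℂ, ‖z‖ = 1 → 0 ≤ κ * (P.eval z * conj (P.eval z))) : 0 ≤ κ := by
  obtain ⟨z, hz, hPz⟩ :=
    (infinite_setOf_norm_eq_one.sdiff (finite_setOfPred_isRoot hP)).nonempty
  have hn : 0 < normSq (P.eval z) := normSq_pos.mpr hPz
  have hκ : κ = κ * (P.eval z * conj (P.eval z)) * ((normSq (P.eval z))⁻¹ : ℝ) := by
    rw [mul_conj, mul_assoc, ← ofReal_mul, mul_inv_cancel₀ hn.ne', ofReal_one, mul_one]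
  rw [hκ]
  exact mul_nonneg (h z hz) (zero_le_real.mpr (inv_nonneg.mpr hn.le))

theorem exists_eq_mul_conj_of_nonneg {f : ℂ[X]} {D : ℕ} (hdeg : f.natDegree ≤ 2 * D)
    (hf : ∀ z : ℂ, ‖z‖ = 1 → 0 ≤ (z ^ D)⁻¹ * f.eval z) :
    ∃ P : ℂ[X], P.natDegree ≤ D ∧
      ∀ z : ℂ, z ≠ 0 → (z ^ D)⁻¹ * f.eval z = P.eval z * conj (P.eval (circleInv z)) := by
  rcases eq_or_ne f 0 with rfl | hf0
  · exact ⟨0, by simp⟩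
  have hsymm := reflect_map_conj_eq_self hdeg fun z hz => (nonneg_iff.mp (hf z hz)).2.symm
  obtain ⟨S, hS⟩ := exists_roots_filter_eq hf0 hdeg hsymm hf
  have hD := natTrailingDegree_add_card hf0 hdeg hsymm hS
  set P₀ := (S.map fun a => X - C a).prod
  set κ := f.leadingCoeff * (S.map fun a => -circleInv a).prod
  have hfP : ∀ z : ℂ, z ≠ 0 →
      (z ^ D)⁻¹ * f.eval z = κ * (P₀.eval z * conj (P₀.eval (circleInv z))) :=
    fun z hz => inv_pow_mul_eval_eq hS hD hz
  have hP₀ : P₀.Monic := monic_multiset_prod_of_monic _ _ fun a _ => monic_X_sub_C a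
  have hκ : 0 ≤ κ := nonneg_of_forall_norm_eq_one_nonneg_mul hP₀.ne_zero fun z hz => by
    simpa [hfP z (ne_zero_of_norm_eq_one hz), circleInv_of_norm_eq_one hz] using hf z hz
  set c : ℝ := √κ.re
  have hc : (c : ℂ) * c = κ := by
    rw [← ofReal_mul, Real.mul_self_sqrt (nonneg_iff.mp hκ).1, ← eq_re_of_ofReal_le hκ]
  refine ⟨C (c : ℂ) * P₀, ?_, fun z hz => ?_⟩
  · refine (natDegree_C_mul_le _ _).trans ?_
    rw [natDegree_multiset_prod_X_sub_C_eq_card]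
    omega
  · rw [hfP z hz, eval_mul, eval_mul, eval_C, eval_C, map_mul, conj_ofReal, ← hc]
    ring

noncomputable def laurentNumerator (D : ℕ) (q : ℤ → ℂ) : ℂ[X] :=
  ∑ i ∈ Finset.Icc (-(D : ℤ)) D, C (q i) * X ^ (i + D).toNat

lemma natDegree_laurentNumerator_le (D : ℕ) (q : ℤ → ℂ) :
    (laurentNumerator D q).natDegree ≤ 2 * D :=
  natDegree_sum_le_of_forall_le _ _ fun i hi =>
    (natDegree_C_mul_X_pow_le _ _).trans (by rw [Finset.mem_Icc] at hi; omega)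

lemma sum_Icc_eq_inv_pow_mul_eval (D : ℕ) (q : ℤ → ℂ) {z : ℂ} (hz : z ≠ 0) :
    ∑ i ∈ Finset.Icc (-(D : ℤ)) D, q i * z ^ i = (z ^ D)⁻¹ * (laurentNumerator D q).eval z := by
  rw [laurentNumerator, eval_finsetSum, Finset.mul_sum]
  refine Finset.sum_congr rfl fun i hi => ?_
  rw [Finset.mem_Icc] at hi
  have hpow : z ^ (i + D).toNat = z ^ D * z ^ i := by
    rw [← zpow_natCast, Int.toNat_of_nonneg (by omega), zpow_add₀ hz, zpow_natCast, mul_comm]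
  rw [eval_C_mul, eval_X_pow, hpow]
  field_simp

end FejerRiesz

open FejerRiesz

/-- Fejér–Riesz theorem: a Laurent polynomial of degree `D` is real-valued and
nonnegative on the unit circle iff it factors as `P(z) * conj (P (1/conj z))`
for some polynomial `P` of degree at most `D`. -/
theorem stmt_5 (D : ℕ) (q : ℤ → ℂ) :
    (∀ z : ℂ, ‖z‖ = 1 →
      (∑ i ∈ Finset.Icc (-(D:ℤ)) (D:ℤ), q i * z ^ i).im = 0 ∧
      0 ≤ (∑ i ∈ Finset.Icc (-(D:ℤ)) (D:ℤ), q i * z ^ i).re) ↔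
    (∃ p : ℕ → ℂ, ∀ z : ℂ, z ≠ 0 →
      (∑ i ∈ Finset.Icc (-(D:ℤ)) (D:ℤ), q i * z ^ i)
        = (∑ i ∈ Finset.range (D + 1), p i * z ^ i) *
          (starRingEnd ℂ) (∑ i ∈ Finset.range (D + 1),
            p i * (((starRingEnd ℂ) z)⁻¹) ^ i)) := by
  constructor
  · intro hQ
    obtain ⟨P, hPdeg, hP⟩ := exists_eq_mul_conj_of_nonneg (natDegree_laurentNumerator_le D q)
      fun z hz => by
        rw [← sum_Icc_eq_inv_pow_mul_eval D q (ne_zero_of_norm_eq_one hz)]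
        exact nonneg_iff.mpr ⟨(hQ z hz).2, (hQ z hz).1.symm⟩
    refine ⟨P.coeff, fun z hz => ?_⟩
    rw [← eval_eq_sum_range' (Nat.lt_succ_of_le hPdeg),
      ← eval_eq_sum_range' (Nat.lt_succ_of_le hPdeg), sum_Icc_eq_inv_pow_mul_eval D q hz]
    exact hP z hz
  · rintro ⟨p, hp⟩ z hz
    rw [hp z (ne_zero_of_norm_eq_one hz), ← circleInv, circleInv_of_norm_eq_one hz, mul_conj]
    exact ⟨by simp, by simpa using normSq_nonneg _⟩
end

section
/- Let Q(z) = \sum_{i=-(N-1)}^{N-1} q_i z^i be a Laurent polynomial of degree N-1. Then Q is nonnegative on the unit circle if and only if there exists an N x N Hermitian positive semidefinite matrix Q such that q_i = Tr_i(Q) for all i, where Tr_i denotes the sum of entries along the i-th superdiagonal (or |i|-th subdiagonal for i < 0). -/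
open ComplexOrder

/-- `diagTrace i X` is the sum of the entries of `X` along the `i`-th
superdiagonal (subdiagonal for `i < 0`). -/
noncomputable def diagTrace {N : ℕ} (i : ℤ) (X : Matrix (Fin N) (Fin N) ℂ) : ℂ :=
  ∑ j : Fin N, ∑ k : Fin N, if (k : ℤ) - (j : ℤ) = i then X j k else 0

/-!
A positive semidefinite `M` gives `∑ Tr_i(M) z^i = v* M v ≥ 0` with `v = (1, z, …, z^(N-1))`.
Conversely, by the Fejér–Riesz theorem a Laurent polynomial of degree `m = N - 1` that is
nonnegative on the unit circle equals `|p(z)|²` there for a polynomial `p` of degree at most `m`,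
and `M = c* c` for the coefficient vector `c` of `p` has the right diagonal traces.
Fejér–Riesz goes by induction on `m`: multiplied by `z^m`, the Laurent polynomial becomes a
polynomial whose roots come in pairs `r, 1 / r̄`, those on the circle being double since the
function has a minimum there; each pair splits off a factor `|z - r|²`.
-/

open Polynomial ComplexConjugate Complex Filter Topology Finset Matrix

lemma infinite_setOf_norm_eq_one : {z : ℂ | ‖z‖ = 1}.Infinite := by
  have hpre := isPreconnected_sphere (E := ℂ) (by rw [rank_real_complex]; norm_num) 0 1
  refine hpre.infinite_of_nontrivial ⟨1, by simp, -1, by simp, by norm_num⟩ |>.mono ?_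
  intro z hz
  simpa using hz

lemma Polynomial.eq_of_eval_eq_on_circle {P Q : ℂ[X]}
    (h : ∀ z : ℂ, ‖z‖ = 1 → P.eval z = Q.eval z) : P = Q :=
  eq_of_infinite_eval_eq P Q (infinite_setOf_norm_eq_one.mono h)

lemma le_of_le_on_circle_of_ne {α : Type*} [TopologicalSpace α] [Preorder α]
    [ClosedIciTopology α]
    {f : ℂ → α} {a : α} {r : ℂ} (hr : ‖r‖ = 1) (hf : ContinuousAt f r)
    (h : ∀ z : ℂ, ‖z‖ = 1 → z ≠ r → a ≤ f z) : a ≤ f r := by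
  have hγ : Tendsto (fun t : ℝ => r * exp (t * I)) (𝓝[>] 0) (𝓝 r) := by
    have : Continuous (fun t : ℝ => r * exp (t * I)) := by fun_prop
    simpa using (this.tendsto 0).mono_left nhdsWithin_le_nhds
  refine ge_of_tendsto (hf.tendsto.comp hγ) ?_
  filter_upwards [Ioo_mem_nhdsGT Real.pi_pos] with t ht
  refine h _ (by simp [hr, norm_exp_ofReal_mul_I]) fun heq => ?_
  have h1 : exp (t * I) = 1 := by
    have hr0 : r ≠ 0 := by rintro rfl; simp at hr
    simpa [hr0] using heq
  have h2 := congrArg Complex.im h1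
  rw [exp_ofReal_mul_I_im, one_im] at h2
  exact (Real.sin_pos_of_pos_of_lt_pi ht.1 ht.2).ne' h2

lemma HasDerivAt.eq_zero_of_nonneg {f : ℝ → ℂ} {f' : ℂ} {a : ℝ} (hf : HasDerivAt f f' a)
    (ha : f a = 0) (hnonneg : ∀ᶠ t in 𝓝 a, 0 ≤ f t) : f' = 0 := by
  have hre : IsLocalMin (fun t => (f t).re) a :=
    hnonneg.mono fun t ht => by simpa [ha] using (nonneg_iff.mp ht).1
  have him : IsLocalMin (fun t => (f t).im) a :=
    hnonneg.mono fun t ht => by simp [ha, ← (nonneg_iff.mp ht).2]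
  apply Complex.ext
  · exact hre.hasDerivAt_eq_zero (reCLM.hasFDerivAt.comp_hasDerivAt a hf)
  · exact him.hasDerivAt_eq_zero (imCLM.hasFDerivAt.comp_hasDerivAt a hf)

lemma Polynomial.eval_reflect_map_conj {P : ℂ[X]} {N : ℕ} (hP : P.natDegree ≤ N) {w : ℂ}
    (hw : w ≠ 0) :
    (reflect N (P.map (starRingEnd ℂ))).eval w = w ^ N * conj (P.eval (conj w)⁻¹) := by
  let : Invertible w⁻¹ := invertibleOfNonzero (inv_ne_zero hw)
  have h := eval₂_reflect_mul_pow (starRingEnd ℂ) w⁻¹ N P hP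
  rw [invOf_eq_inv, inv_inv] at h
  have hw' : w⁻¹ = conj (conj w)⁻¹ := by simp
  rw [reflect_map, eval_map, ← eval₂_at_apply, ← hw', ← h, inv_pow]
  field_simp

/-- `P = z^m t` with `t` a Laurent polynomial that is real and nonnegative on the unit circle. -/
def NonnegOnCircle (m : ℕ) (P : ℂ[X]) : Prop :=
  ∀ z : ℂ, ‖z‖ = 1 → 0 ≤ conj z ^ m * P.eval z

lemma conj_mul_self_of_norm_eq_one {z : ℂ} (hz : ‖z‖ = 1) : conj z * z = 1 := by
  rw [← normSq_eq_conj_mul_self, normSq_eq_norm_sq, hz]; simp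

namespace NonnegOnCircle

variable {m : ℕ} {P : ℂ[X]}

lemma pow_mul_conj_eval (hP : NonnegOnCircle m P) {z : ℂ} (hz : ‖z‖ = 1) :
    z ^ (2 * m) * conj (P.eval z) = P.eval z := by
  have hreal := conj_eq_iff_re.mpr (eq_re_of_ofReal_le (hP z hz)).symm
  rw [map_mul, map_pow, conj_conj] at hreal
  calc z ^ (2 * m) * conj (P.eval z) = z ^ m * (z ^ m * conj (P.eval z)) := by ring
    _ = (conj z * z) ^ m * P.eval z := by rw [hreal]; ring
    _ = P.eval z := by rw [conj_mul_self_of_norm_eq_one hz, one_pow, one_mul]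

lemma reflect_map_conj (hP : NonnegOnCircle m P) (hdeg : P.natDegree ≤ 2 * m) :
    reflect (2 * m) (P.map (starRingEnd ℂ)) = P :=
  eq_of_eval_eq_on_circle fun z hz => by
    have hz0 : z ≠ 0 := by rintro rfl; simp at hz
    rw [eval_reflect_map_conj hdeg hz0, ← inv_eq_conj hz, inv_inv, hP.pow_mul_conj_eval hz]

lemma coeff_zero_eq_conj (hP : NonnegOnCircle m P) (hdeg : P.natDegree ≤ 2 * m) :
    P.coeff 0 = conj (P.coeff (2 * m)) := by
  conv_lhs => rw [← hP.reflect_map_conj hdeg]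
  rw [coeff_reflect, revAt_zero, coeff_map]

lemma isRoot_inv_conj (hP : NonnegOnCircle m P) (hdeg : P.natDegree ≤ 2 * m) {r : ℂ}
    (hroot : P.IsRoot r) : P.IsRoot (conj r)⁻¹ := by
  rcases eq_or_ne r 0 with rfl | hr0
  · simpa using hroot
  rw [IsRoot, ← hP.reflect_map_conj hdeg, eval_reflect_map_conj hdeg (by simpa using hr0)]
  simp [hroot.eq_zero]

lemma isRoot_derivative (hP : NonnegOnCircle m P) {r : ℂ} (hr : ‖r‖ = 1)
    (hroot : P.IsRoot r) :
    P.derivative.IsRoot r := by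
  have hr0 : r ≠ 0 := by rintro rfl; simp at hr
  set γ : ℝ → ℂ := fun t => r * exp (t * I)
  have hγ : ∀ t, ‖γ t‖ = 1 := fun t => by simp [γ, hr, norm_exp_ofReal_mul_I]
  have hγ' : HasDerivAt γ (r * I) 0 := by
    simpa [γ] using (((hasDerivAt_id (0 : ℝ)).ofReal_comp.mul_const I).cexp.const_mul r)
  have hA : DifferentiableAt ℝ (fun t => (γ t ^ m)⁻¹) 0 :=
    (hγ'.differentiableAt.pow m).inv (by simp [γ, hr0])
  have hB : HasDerivAt (fun t => P.eval (γ t)) (P.derivative.eval (γ 0) * (r * I)) 0 :=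
    (P.hasDerivAt (γ 0)).comp (0 : ℝ) hγ'
  -- `t ↦ P(γ t) / γ t ^ m` is real, nonnegative and vanishes at `0`.
  have hzero := (hA.hasDerivAt.mul hB).eq_zero_of_nonneg (by simp [γ, hroot.eq_zero]) <|
    .of_forall fun t => by simpa [← inv_eq_conj (hγ t)] using hP (γ t) (hγ t)
  simpa [γ, hroot.eq_zero, hr0, I_ne_zero] using hzero

lemma of_eval_eq_mul_conj_sub_mul_sub {r : ℂ} {Q : ℂ[X]} (hP : NonnegOnCircle (m + 1) P)
    (h : ∀ z : ℂ, ‖z‖ = 1 → P.eval z = z * (conj (z - r) * (z - r)) * Q.eval z) :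
    NonnegOnCircle m Q := by
  have hne : ∀ z : ℂ, ‖z‖ = 1 → z ≠ r → 0 ≤ conj z ^ m * Q.eval z := by
    intro z hz hzr
    have hd : 0 < normSq (z - r) := normSq_pos.mpr (sub_ne_zero.mpr hzr)
    have key : conj z ^ m * Q.eval z =
        ((normSq (z - r))⁻¹ : ℝ) * (conj z ^ (m + 1) * P.eval z) := by
      rw [h z hz, ← normSq_eq_conj_mul_self]
      push_cast
      field_simp
      linear_combination (-(conj z) ^ m * Q.eval z) * conj_mul_self_of_norm_eq_one hz
    rw [key]
    exact mul_nonneg (by exact_mod_cast (inv_pos.mpr hd).le) (hP z hz)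
  intro z hz
  rcases eq_or_ne z r with rfl | hzr
  · exact le_of_le_on_circle_of_ne (f := fun w => conj w ^ m * Q.eval w) hz (by fun_prop) hne
  · exact hne z hz hzr

lemma X_sub_C_mul_X_sub_C_inv_conj_dvd (hP : NonnegOnCircle m P) (hdeg : P.natDegree ≤ 2 * m)
    (hP0 : P ≠ 0) {r : ℂ} (hr0 : r ≠ 0) (hroot : P.IsRoot r) :
    (X - C r) * (X - C (conj r)⁻¹) ∣ P := by
  by_cases hr : ‖r‖ = 1
  · rw [← inv_eq_conj hr, inv_inv, ← sq, ← le_rootMultiplicity_iff hP0]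
    exact (one_lt_rootMultiplicity_iff_isRoot hP0).mpr ⟨hroot, hP.isRoot_derivative hr hroot⟩
  · have hne : r ≠ (conj r)⁻¹ := by
      intro h
      apply hr
      have h1 : conj r * r = 1 := by
        nth_rw 2 [h]; exact mul_inv_cancel₀ (by simpa using hr0)
      rw [← normSq_eq_conj_mul_self, normSq_eq_norm_sq] at h1
      exact (pow_eq_one_iff_of_nonneg (norm_nonneg r) two_ne_zero).mp (by exact_mod_cast h1)
    exact (isCoprime_X_sub_C_of_isUnit_sub (sub_ne_zero.mpr hne).isUnit).mul_dvd
      (dvd_iff_isRoot.mpr hroot) (dvd_iff_isRoot.mpr (hP.isRoot_inv_conj hdeg hroot))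

lemma exists_eval_eq_mul_conj_sub_mul_sub (hP : NonnegOnCircle (m + 1) P)
    (hdeg : P.natDegree ≤ 2 * (m + 1)) :
    ∃ r : ℂ, ∃ Q : ℂ[X], Q.natDegree ≤ 2 * m ∧
      ∀ z : ℂ, ‖z‖ = 1 → P.eval z = z * (conj (z - r) * (z - r)) * Q.eval z := by
  have hsymm := hP.coeff_zero_eq_conj hdeg
  by_cases h0 : P.coeff 0 = 0
  · refine ⟨0, P.divX, ?_, fun z hz => ?_⟩
    · have := natDegree_le_pred hdeg (by rwa [h0, eq_comm, map_eq_zero] at hsymm)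
      rw [natDegree_divX_eq_natDegree_tsub_one]
      omega
    · conv_lhs => rw [← X_mul_divX_add P]
      simp [h0, conj_mul_self_of_norm_eq_one hz]
  · have hP0 : P ≠ 0 := fun h => h0 (by simp [h])
    have hnat : P.natDegree = 2 * (m + 1) :=
      le_antisymm hdeg (le_natDegree_of_ne_zero fun h => h0 (by rw [hsymm, h, map_zero]))
    obtain ⟨r, hroot⟩ := exists_root (f := P) (by
      rw [degree_eq_natDegree hP0, hnat]; exact_mod_cast (by omega : 0 < 2 * (m + 1)))
    have hr0 : r ≠ 0 := by rintro rfl; exact h0 (by rwa [coeff_zero_eq_eval_zero])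
    obtain ⟨Q, hQ⟩ := hP.X_sub_C_mul_X_sub_C_inv_conj_dvd hdeg hP0 hr0 hroot
    refine ⟨r, C (-(conj r)⁻¹) * Q, ?_, fun z hz => ?_⟩
    · have hQ0 : Q ≠ 0 := by rintro rfl; exact hP0 (by simpa using hQ)
      have := congrArg natDegree hQ
      rw [natDegree_mul (mul_ne_zero (X_sub_C_ne_zero _) (X_sub_C_ne_zero _)) hQ0,
        natDegree_mul (X_sub_C_ne_zero _) (X_sub_C_ne_zero _), natDegree_X_sub_C,
        natDegree_X_sub_C] at this
      exact (natDegree_C_mul_le _ _).trans (by omega)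
    · -- On the circle `(z - r) (z - 1 / r̄) = -z |z - r|² / r̄`.
      have hz0 : z ≠ 0 := by rintro rfl; simp at hz
      have hcr0 : conj r ≠ 0 := by simpa using hr0
      rw [hQ]
      simp only [eval_mul, eval_sub, eval_X, eval_C, map_sub, ← inv_eq_conj hz]
      field_simp
      ring

theorem exists_eval_eq_pow_mul_conj_mul_self :
    ∀ (m : ℕ) (P : ℂ[X]), P.natDegree ≤ 2 * m → NonnegOnCircle m P →
      ∃ p : ℂ[X], p.natDegree ≤ m ∧
        ∀ z : ℂ, ‖z‖ = 1 → P.eval z = z ^ m * (conj (p.eval z) * p.eval z)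
  | 0, P, hdeg, hP => by
    obtain ⟨c, rfl⟩ : ∃ c, P = C c := ⟨_, eq_C_of_natDegree_le_zero (by omega)⟩
    have hc : 0 ≤ c := by simpa using hP 1 (by simp)
    refine ⟨C (Real.sqrt c.re : ℂ), by simp, fun z _ => ?_⟩
    have hre : 0 ≤ c.re := (nonneg_iff.mp hc).1
    simp [← ofReal_mul, Real.mul_self_sqrt hre, ← eq_re_of_ofReal_le hc]
  | m + 1, P, hdeg, hP => by
    obtain ⟨r, Q, hQdeg, hPQ⟩ := hP.exists_eval_eq_mul_conj_sub_mul_sub hdeg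
    obtain ⟨p, hpdeg, hpQ⟩ := exists_eval_eq_pow_mul_conj_mul_self m Q hQdeg
      (hP.of_eval_eq_mul_conj_sub_mul_sub hPQ)
    refine ⟨(X - C r) * p, natDegree_mul_le.trans (by simp; omega), fun z hz => ?_⟩
    rw [hPQ z hz, hpQ z hz]
    simp only [eval_mul, eval_sub, eval_X, eval_C, map_mul]
    ring

end NonnegOnCircle

lemma sum_diagTrace_mul {N : ℕ} (M : Matrix (Fin N) (Fin N) ℂ) (f : ℤ → ℂ) :
    ∑ i ∈ Icc (-(N : ℤ) + 1) (N - 1), diagTrace i M * f i =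
      ∑ j : Fin N, ∑ k : Fin N, M j k * f (k - j) := by
  simp only [diagTrace, sum_mul, ite_mul, zero_mul]
  rw [sum_comm]
  refine sum_congr rfl fun j _ => ?_
  rw [sum_comm]
  refine sum_congr rfl fun k _ => ?_
  rw [sum_ite_eq]
  have := j.isLt; have := k.isLt
  rw [if_pos (mem_Icc.mpr (by omega))]

lemma sum_diagTrace_mul_zpow {N : ℕ} (M : Matrix (Fin N) (Fin N) ℂ) {z : ℂ}
    (hz : ‖z‖ = 1) :
    ∑ i ∈ Icc (-(N : ℤ) + 1) (N - 1), diagTrace i M * z ^ i =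
      star (fun k : Fin N => z ^ (k : ℕ)) ⬝ᵥ (M *ᵥ fun k : Fin N => z ^ (k : ℕ)) := by
  have hz0 : z ≠ 0 := by rintro rfl; simp at hz
  rw [sum_diagTrace_mul]
  simp only [dotProduct, mulVec, Pi.star_apply, RCLike.star_def, mul_sum]
  refine sum_congr rfl fun j _ => sum_congr rfl fun k _ => ?_
  rw [zpow_sub₀ hz0, zpow_natCast, zpow_natCast, map_pow, ← inv_eq_conj hz, inv_pow]
  ring

lemma star_dotProduct_vecMulVec_mulVec {n : Type*} [Fintype n] (c v : n → ℂ) :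
    star v ⬝ᵥ (vecMulVec (star c) c *ᵥ v) = conj (c ⬝ᵥ v) * (c ⬝ᵥ v) := by
  rw [vecMulVec_mulVec, dotProduct_smul, star_dotProduct_star]
  simp [mul_comm]

noncomputable def laurentToPoly (m : ℕ) (a : ℤ → ℂ) : ℂ[X] :=
  ∑ i ∈ Icc (-(m : ℤ)) m, C (a i) * X ^ (i + m).toNat

lemma natDegree_laurentToPoly_le (m : ℕ) (a : ℤ → ℂ) :
    (laurentToPoly m a).natDegree ≤ 2 * m :=
  natDegree_sum_le_of_forall_le _ _ fun i hi =>
    (natDegree_C_mul_X_pow_le _ _).trans (by rw [mem_Icc] at hi; omega)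

lemma eval_laurentToPoly (m : ℕ) (a : ℤ → ℂ) {z : ℂ} (hz : z ≠ 0) :
    (laurentToPoly m a).eval z = z ^ m * ∑ i ∈ Icc (-(m : ℤ)) m, a i * z ^ i := by
  rw [laurentToPoly, eval_finsetSum, mul_sum]
  refine sum_congr rfl fun i hi => ?_
  rw [mem_Icc] at hi
  rw [eval_C_mul, eval_pow, eval_X, ← zpow_natCast, Int.toNat_of_nonneg (by omega),
    zpow_add₀ hz, zpow_natCast]
  ring

lemma coeff_laurentToPoly (m : ℕ) (a : ℤ → ℂ) {i : ℤ} (hi : i ∈ Icc (-(m : ℤ)) m) :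
    (laurentToPoly m a).coeff (i + m).toNat = a i := by
  rw [laurentToPoly, finsetSum_coeff, sum_eq_single i]
  · simp
  · intro j hj hji
    rw [mem_Icc] at hi hj
    rw [coeff_C_mul_X_pow, if_neg (by omega)]
  · exact fun h => absurd hi h

lemma eq_of_sum_mul_zpow_eq_on_circle {m : ℕ} {a b : ℤ → ℂ}
    (h : ∀ z : ℂ, ‖z‖ = 1 →
      ∑ i ∈ Icc (-(m : ℤ)) m, a i * z ^ i = ∑ i ∈ Icc (-(m : ℤ)) m, b i * z ^ i)
    {i : ℤ} (hi : i ∈ Icc (-(m : ℤ)) m) : a i = b i := by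
  have hab : laurentToPoly m a = laurentToPoly m b := by
    refine eq_of_eval_eq_on_circle fun z hz => ?_
    have hz0 : z ≠ 0 := by rintro rfl; simp at hz
    rw [eval_laurentToPoly m a hz0, eval_laurentToPoly m b hz0, h z hz]
  rw [← coeff_laurentToPoly m a hi, hab, coeff_laurentToPoly m b hi]

lemma Icc_neg_add_one_sub_one_succ (m : ℕ) :
    Icc (-((m + 1 : ℕ) : ℤ) + 1) ((m + 1 : ℕ) - 1) = Icc (-(m : ℤ)) m := by
  congr 1 <;> omega

theorem exists_posSemidef_diagTrace_eq (m : ℕ) (q : ℤ → ℂ)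
    (hq : ∀ z : ℂ, ‖z‖ = 1 → 0 ≤ ∑ i ∈ Icc (-(m : ℤ)) m, q i * z ^ i) :
    ∃ M : Matrix (Fin (m + 1)) (Fin (m + 1)) ℂ, M.PosSemidef ∧
      ∀ i ∈ Icc (-(m : ℤ)) m, q i = diagTrace i M := by
  have hP : NonnegOnCircle m (laurentToPoly m q) := fun z hz => by
    have hz0 : z ≠ 0 := by rintro rfl; simp at hz
    rw [eval_laurentToPoly m q hz0, ← mul_assoc, ← mul_pow, conj_mul_self_of_norm_eq_one hz,
      one_pow, one_mul]
    exact hq z hz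
  obtain ⟨p, hpdeg, hp⟩ := NonnegOnCircle.exists_eval_eq_pow_mul_conj_mul_self m _
    (natDegree_laurentToPoly_le m q) hP
  let c : Fin (m + 1) → ℂ := fun k => p.coeff k
  refine ⟨vecMulVec (star c) c, posSemidef_vecMulVec_star_self c, fun i hi => ?_⟩
  refine eq_of_sum_mul_zpow_eq_on_circle (b := fun i => diagTrace i _) (fun z hz => ?_) hi
  have hz0 : z ≠ 0 := by rintro rfl; simp at hz
  have hpc : c ⬝ᵥ (fun k : Fin (m + 1) => z ^ (k : ℕ)) = p.eval z := by
    rw [eval_eq_sum_range' (Nat.lt_succ_of_le hpdeg), ← Fin.sum_univ_eq_sum_range]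
    rfl
  have h := sum_diagTrace_mul_zpow (vecMulVec (star c) c) hz
  rw [star_dotProduct_vecMulVec_mulVec, hpc, Icc_neg_add_one_sub_one_succ] at h
  rw [h]
  apply mul_left_cancel₀ (pow_ne_zero m hz0)
  rw [← eval_laurentToPoly m q hz0, hp z hz]

theorem stmt_7_general (N : ℕ) (q : ℤ → ℂ) :
    (∀ z : ℂ, ‖z‖ = 1 →
      (∑ i ∈ Finset.Icc (-(N:ℤ) + 1) ((N:ℤ) - 1), q i * z ^ i).im = 0 ∧
      0 ≤ (∑ i ∈ Finset.Icc (-(N:ℤ) + 1) ((N:ℤ) - 1), q i * z ^ i).re) ↔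
    (∃ M : Matrix (Fin N) (Fin N) ℂ, M.PosSemidef ∧
      ∀ i ∈ Finset.Icc (-(N:ℤ) + 1) ((N:ℤ) - 1), q i = diagTrace i M) := by
  have hnonneg : ∀ w : ℂ, w.im = 0 ∧ 0 ≤ w.re ↔ 0 ≤ w := fun w => by
    rw [nonneg_iff, and_comm, eq_comm]
  simp only [hnonneg]
  refine ⟨fun h => ?_, fun ⟨M, hM, hqM⟩ z hz => ?_⟩
  · rcases N with _ | m
    · exact ⟨0, .zero, by simp⟩
    rw [Icc_neg_add_one_sub_one_succ] at h ⊢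
    exact exists_posSemidef_diagTrace_eq m q h
  · rw [sum_congr rfl fun i hi => by rw [hqM i hi], sum_diagTrace_mul_zpow M hz]
    exact hM.dotProduct_mulVec_nonneg _

/-- A degree `N-1` Laurent polynomial is nonnegative on the unit circle iff its
coefficients are the diagonal traces of some Hermitian PSD `N × N` matrix. -/
theorem stmt_7 (N : ℕ) (hN : 0 < N) (q : ℤ → ℂ) :
    (∀ z : ℂ, ‖z‖ = 1 →
      (∑ i ∈ Finset.Icc (-(N:ℤ) + 1) ((N:ℤ) - 1), q i * z ^ i).im = 0 ∧
      0 ≤ (∑ i ∈ Finset.Icc (-(N:ℤ) + 1) ((N:ℤ) - 1), q i * z ^ i).re) ↔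
    (∃ M : Matrix (Fin N) (Fin N) ℂ, M.PosSemidef ∧
      ∀ i ∈ Finset.Icc (-(N:ℤ) + 1) ((N:ℤ) - 1), q i = diagTrace i M) :=
  stmt_7_general N q
end
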